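/- Fix the candidate set C = {a,b,c}. Let w_1,…,w_n be positive integers, let M and k be positive integers with k ≤ n, 2k < n, M < ∑_{i=1}^n w_i and M < kM', where M' = max{w_i : i ∈ [n]}. Let G_1,…,G_n and Ĝ be profiles over C such that: for each i ∈ [n], D_{G_i}(a,b) = 2w_i, D_{G_i}(a,c) = 2(M' − w_i) and D_{G_i}(b,c) = 0; and D_{Ĝ}(b,a) = 2M − 1, D_{Ĝ}(c,a) = 2(kM' − M) − 1 and D_{Ĝ}(b,c) = 1 (such profiles exist). Assume that a is the Condorcet winner of the concatenation of all the groups G_1,…,G_n, Ĝ. Then the Optimal Attack instance (C, {G_1,…,G_n, Ĝ}, k_a = n+1, k_d = k) for the Condorcet voting rule is a Yes instance if and only if there is NO index set I ⊆ [n] with |I| = k and ∑_{i∈I} w_i = M. -/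

import Mathlib

open Finset

/-- A vote over a candidate set `C` with `m` candidates: a ranking assigning each
candidate its position. -/
abbrev Vote (C : Type*) (m : ℕ) := C ≃ Fin m

/-- The score of candidate `x` in profile `P` under score vector `α`. -/
def score {C : Type*} {m : ℕ} (α : Fin m → ℝ) (P : Multiset (Vote C m)) (x : C) : ℝ :=
  (P.map fun v => α (v x)).sum

/-- The scoring rule of `α`: the set of candidates with maximum score. -/
def scoringRule {C : Type*} {m : ℕ} (α : Fin m → ℝ) (P : Multiset (Vote C m)) : Set C :=
  {x | ∀ y, score α P y ≤ score α P x}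

/-- `margin P x y`: number of votes preferring `x` to `y` minus those preferring `y` to `x`. -/
def margin {C : Type*} {m : ℕ} (P : Multiset (Vote C m)) (x y : C) : ℤ :=
  ((P.filter fun v => v x < v y).card : ℤ) - ((P.filter fun v => v y < v x).card : ℤ)

/-- `c` is the Condorcet winner of `P`. -/
def CondorcetWinner {C : Type*} {m : ℕ} (P : Multiset (Vote C m)) (c : C) : Prop :=
  ∀ y, y ≠ c → 0 < margin P c y

/-- The Condorcet voting rule: `{c}` if a Condorcet winner `c` exists, all candidates otherwise. -/
def condorcetRule {C : Type*} {m : ℕ} (P : Multiset (Vote C m)) : Set C :=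
  {x | CondorcetWinner P x ∨ ¬ ∃ c, CondorcetWinner P c}

/-- `α` is monotone nonincreasing (part of being a score vector). -/
def IsMonotoneScore {m : ℕ} (α : Fin m → ℝ) : Prop :=
  ∀ i j : Fin m, i ≤ j → α j ≤ α i

/-- `α` is normalized: some consecutive difference is `1` and all later entries are `0`. -/
def IsNormalized {m : ℕ} (α : Fin m → ℝ) : Prop :=
  ∃ j : ℕ, ∃ hj : j + 1 < m, α ⟨j, Nat.lt_of_succ_lt hj⟩ - α ⟨j + 1, hj⟩ = 1 ∧
    ∀ ℓ : Fin m, j < (ℓ : ℕ) → α ℓ = 0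

/-- `Q` is a profile `P_u^v`: it has `m` votes and
`s_Q(u) + 1 = s_Q(v) - 1 = s_Q(z)` for every `z ∉ {u, v}`. -/
def PfGood {C : Type*} {m : ℕ} (α : Fin m → ℝ) (Q : Multiset (Vote C m)) (u v : C) : Prop :=
  Multiset.card Q = m ∧ score α Q u + 1 = score α Q v - 1 ∧
    ∀ z : C, z ≠ u → z ≠ v → score α Q z = score α Q v - 1

/-- The Optimal Defense instance with groups `G`, attacker resource `ka` and defender
resource `kd` is a Yes instance for voting rule `r`. -/
def DefenseYes {C : Type*} {m N : ℕ} (r : Multiset (Vote C m) → Set C)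
    (G : Fin N → Multiset (Vote C m)) (ka kd : ℕ) : Prop :=
  ∃ I : Finset (Fin N), I.card ≤ kd ∧
    ∀ I' : Finset (Fin N), Disjoint I I' → I'.card ≤ ka →
      r (∑ i ∈ Finset.univ \ I', G i) = r (∑ i, G i)

/-- The Optimal Attack instance with groups `G`, attacker resource `ka` and defender
resource `kd` is a Yes instance for voting rule `r`. -/
def AttackYes {C : Type*} {m N : ℕ} (r : Multiset (Vote C m) → Set C)
    (G : Fin N → Multiset (Vote C m)) (ka kd : ℕ) : Prop :=
  ∃ I : Finset (Fin N), I.card ≤ ka ∧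
    ∀ I' : Finset (Fin N), I'.card ≤ kd →
      r (∑ i ∈ Finset.univ \ (I \ I'), G i) ≠ r (∑ i, G i)

/-!
Only the margins `D(a,b)` and `D(a,c)` matter. When the groups `G_j`, `j ∈ S`, survive, they are
`2 ∑_S w` and `2 ∑_S (M' - w)`, lowered by `2M - 1` and `2(kM' - M) - 1` if `Ĝ` survives too.
If some `k`-set `I₀` has weight `M`, every attack is undone: when `Ĝ` is removed, restoring one
group with `w_j < M'` (one exists in `I₀` since `M < kM'`) lets `a` win; otherwise restoring `I₀`
does. Conversely, removing every `G_i` is a successful attack: a restored set `S` of at most `k`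
groups keeps `a` winning only if `∑_S w ≥ M` and `|S| M' - ∑_S w ≥ kM' - M`, which forces
`|S| = k` and `∑_S w = M`.
-/

section Margin

variable {C : Type*} {m : ℕ}

theorem margin_zero (x y : C) : margin (0 : Multiset (Vote C m)) x y = 0 := by
  simp [margin]

theorem margin_add (P Q : Multiset (Vote C m)) (x y : C) :
    margin (P + Q) x y = margin P x y + margin Q x y := by
  simp only [margin, Multiset.filter_add, Multiset.card_add, Nat.cast_add]
  ring

theorem margin_swap (P : Multiset (Vote C m)) (x y : C) : margin P y x = -margin P x y := by
  simp [margin]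

def marginHom (x y : C) : Multiset (Vote C m) →+ ℤ where
  toFun P := margin P x y
  map_zero' := margin_zero x y
  map_add' P Q := margin_add P Q x y

theorem margin_sum {ι : Type*} (s : Finset ι) (P : ι → Multiset (Vote C m)) (x y : C) :
    margin (∑ i ∈ s, P i) x y = ∑ i ∈ s, margin (P i) x y :=
  map_sum (marginHom x y) P s

end Margin

theorem Fin.sum_finset_snoc {α : Type*} [AddCommMonoid α] {n : ℕ} (f : Fin n → α) (x : α)
    (T : Finset (Fin (n + 1))) :
    ∑ i ∈ T, (Fin.snoc f x : Fin (n + 1) → α) i =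
      ∑ j ∈ univ.filter (fun j => j.castSucc ∈ T), f j + if Fin.last n ∈ T then x else 0 := by
  conv_lhs => rw [← univ_inter T, ← sum_ite_mem, Fin.sum_univ_castSucc]
  simp only [sum_filter, Fin.snoc_castSucc, Fin.snoc_last]

theorem margin_sum_snoc {C : Type*} {m n : ℕ} (G : Fin n → Multiset (Vote C m))
    (H : Multiset (Vote C m)) (T : Finset (Fin (n + 1))) (x y : C) :
    margin (∑ i ∈ T, (Fin.snoc G H : Fin (n + 1) → Multiset (Vote C m)) i) x y =
      ∑ j ∈ univ.filter (fun j => j.castSucc ∈ T), margin (G j) x y +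
        if Fin.last n ∈ T then margin H x y else 0 := by
  rw [Fin.sum_finset_snoc, margin_add, margin_sum]
  split_ifs <;> simp [margin_zero]

section Condorcet

variable {C : Type*} {m : ℕ} {P : Multiset (Vote C m)} {a b c : C}

theorem CondorcetWinner.unique (ha : CondorcetWinner P a) (hb : CondorcetWinner P b) : a = b := by
  by_contra hab
  have hba := hb a hab
  rw [margin_swap] at hba
  linarith [ha b (Ne.symm hab)]

theorem condorcetRule_eq_singleton_iff [Nontrivial C] :
    condorcetRule P = {a} ↔ CondorcetWinner P a := by
  refine ⟨fun h => ?_, fun ha => ?_⟩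
  · have ha : a ∈ condorcetRule P := h ▸ rfl
    refine ha.resolve_right fun hnone => ?_
    obtain ⟨b, hb⟩ := exists_ne a
    have hb' : b ∈ condorcetRule P := Or.inr hnone
    rw [h] at hb'
    exact hb hb'
  · ext x
    constructor
    · rintro (hx | hnone)
      · exact hx.unique ha
      · exact absurd ⟨a, ha⟩ hnone
    · rintro rfl
      exact Or.inl ha

theorem condorcetWinner_iff_of_forall_eq_or (huniv : ∀ y, y = a ∨ y = b ∨ y = c)
    (hab : a ≠ b) (hac : a ≠ c) :
    CondorcetWinner P a ↔ 0 < margin P a b ∧ 0 < margin P a c := by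
  refine ⟨fun h => ⟨h b hab.symm, h c hac.symm⟩, fun ⟨hb, hc⟩ y hy => ?_⟩
  rcases huniv y with rfl | rfl | rfl
  exacts [absurd rfl hy, hb, hc]

theorem attackYes_condorcetRule_iff [Nontrivial C] {N ka kd : ℕ} {F : Fin N → Multiset (Vote C m)}
    (ha : CondorcetWinner (∑ i, F i) a) :
    AttackYes condorcetRule F ka kd ↔ ∃ I : Finset (Fin N), I.card ≤ ka ∧
      ∀ I' : Finset (Fin N), I'.card ≤ kd → ¬ CondorcetWinner (∑ i ∈ univ \ (I \ I'), F i) a := by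
  simp only [AttackYes, condorcetRule_eq_singleton_iff.2 ha, Ne, condorcetRule_eq_singleton_iff]

end Condorcet

theorem eq_or_eq_or_eq_of_card_eq_three {C : Type*} [Fintype C] (hC : Fintype.card C = 3)
    {a b c : C} (hab : a ≠ b) (hac : a ≠ c) (hbc : b ≠ c) (y : C) : y = a ∨ y = b ∨ y = c := by
  classical
  have huniv : ({a, b, c} : Finset C) = univ :=
    eq_univ_of_card _ ((card_eq_three.2 ⟨a, b, c, hab, hac, hbc, rfl⟩).trans hC.symm)
  have hy := mem_univ y
  rw [← huniv] at hy
  simpa using hy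

-- `Ĝ`'s margins are odd, so with `Ĝ` present strict positivity becomes a non-strict bound.
theorem condorcetWinner_sum_snoc_iff {C : Type*} {a b c : C} (huniv : ∀ y, y = a ∨ y = b ∨ y = c)
    (hab : a ≠ b) (hac : a ≠ c) {n M k M' : ℕ} {w : Fin n → ℕ}
    {G : Fin n → Multiset (Vote C 3)} {Ghat : Multiset (Vote C 3)}
    (hGab : ∀ i, margin (G i) a b = 2 * (w i : ℤ))
    (hGac : ∀ i, margin (G i) a c = 2 * ((M' : ℤ) - (w i : ℤ)))
    (hHba : margin Ghat b a = 2 * (M : ℤ) - 1)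
    (hHca : margin Ghat c a = 2 * ((k : ℤ) * (M' : ℤ) - (M : ℤ)) - 1)
    (T : Finset (Fin (n + 1))) :
    CondorcetWinner (∑ i ∈ T, (Fin.snoc G Ghat : Fin (n + 1) → Multiset (Vote C 3)) i) a ↔
      if Fin.last n ∈ T then
        (M : ℤ) ≤ ∑ j ∈ univ.filter (fun j => j.castSucc ∈ T), (w j : ℤ) ∧
          (k : ℤ) * M' - M ≤ ∑ j ∈ univ.filter (fun j => j.castSucc ∈ T), ((M' : ℤ) - w j)
      else
        0 < ∑ j ∈ univ.filter (fun j => j.castSucc ∈ T), (w j : ℤ) ∧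
          0 < ∑ j ∈ univ.filter (fun j => j.castSucc ∈ T), ((M' : ℤ) - w j) := by
  rw [condorcetWinner_iff_of_forall_eq_or huniv hab hac, margin_sum_snoc, margin_sum_snoc,
    margin_swap Ghat b, margin_swap Ghat c, hHba, hHca]
  simp only [hGab, hGac, ← mul_sum]
  split_ifs <;> omega

section Weights

variable {ι : Type*} {S : Finset ι} {w : ι → ℕ} {M k M' : ℕ}

theorem sum_pos_and_sum_sub_pos_of_mem {j : ι} (hj : j ∈ S) (hwj : 0 < w j) (hwj' : w j < M')
    (hw : ∀ i, w i ≤ M') :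
    0 < ∑ i ∈ S, (w i : ℤ) ∧ 0 < ∑ i ∈ S, ((M' : ℤ) - w i) :=
  ⟨sum_pos' (fun i _ => by positivity) ⟨j, hj, by simpa⟩,
    sum_pos' (fun i _ => by simpa using hw i) ⟨j, hj, by simpa⟩⟩

theorem le_sum_and_le_sum_sub_of_subset {I₀ : Finset ι} (hI₀ : I₀ ⊆ S) (hcard : I₀.card = k)
    (hsum : ∑ i ∈ I₀, w i = M) (hw : ∀ i, w i ≤ M') :
    (M : ℤ) ≤ ∑ i ∈ S, (w i : ℤ) ∧ (k : ℤ) * M' - M ≤ ∑ i ∈ S, ((M' : ℤ) - w i) := by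
  have hI₀sub : ∑ i ∈ I₀, ((M' : ℤ) - w i) = k * M' - M := by
    rw [sum_sub_distrib, sum_const, hcard, nsmul_eq_mul, ← Nat.cast_sum, hsum]
  constructor
  · rw [← hsum, Nat.cast_sum]
    exact sum_le_sum_of_subset_of_nonneg hI₀ fun i _ _ => by positivity
  · rw [← hI₀sub]
    exact sum_le_sum_of_subset_of_nonneg hI₀ fun i _ _ => by simpa using hw i

theorem card_eq_and_sum_eq_of_le_sum (hM' : 0 < M') (hS : S.card ≤ k)
    (hab : (M : ℤ) ≤ ∑ i ∈ S, (w i : ℤ)) (hac : (k : ℤ) * M' - M ≤ ∑ i ∈ S, ((M' : ℤ) - w i)) :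
    S.card = k ∧ ∑ i ∈ S, w i = M := by
  rw [sum_sub_distrib, sum_const, nsmul_eq_mul] at hac
  have hS' : (S.card : ℤ) ≤ k := by exact_mod_cast hS
  have hM'' : (0 : ℤ) < M' := by exact_mod_cast hM'
  have hsum : ∑ i ∈ S, (w i : ℤ) = M := by nlinarith
  refine ⟨?_, by exact_mod_cast hsum⟩
  have : (k : ℤ) ≤ S.card := le_of_mul_le_mul_right (by linarith) hM''
  omega

end Weights

theorem stmt5_general {C : Type} [Fintype C] (hC : Fintype.card C = 3)
    (a b c : C) (hab : a ≠ b) (hac : a ≠ c) (hbc : b ≠ c)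
    (n : ℕ) (w : Fin n → ℕ) (hwpos : ∀ i, 0 < w i)
    (M k M' : ℕ) (hkpos : 0 < k) (hM'def : M' = Finset.univ.sup w) (hMkM' : M < k * M')
    (G : Fin n → Multiset (Vote C 3)) (Ghat : Multiset (Vote C 3))
    (hGab : ∀ i, margin (G i) a b = 2 * (w i : ℤ))
    (hGac : ∀ i, margin (G i) a c = 2 * ((M' : ℤ) - (w i : ℤ)))
    (hHba : margin Ghat b a = 2 * (M : ℤ) - 1)
    (hHca : margin Ghat c a = 2 * ((k : ℤ) * (M' : ℤ) - (M : ℤ)) - 1)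
    (hwin : CondorcetWinner (∑ i : Fin (n + 1), (Fin.snoc G Ghat : Fin (n + 1) → Multiset (Vote C 3)) i) a) :
    AttackYes condorcetRule (Fin.snoc G Ghat) (n + 1) k ↔
    ¬ ∃ I : Finset (Fin n), I.card = k ∧ ∑ i ∈ I, w i = M := by
  have : Nontrivial C := nontrivial_of_ne a b hab
  have hwle : ∀ i, w i ≤ M' := fun i => hM'def ▸ le_sup (mem_univ i)
  have hCW := condorcetWinner_sum_snoc_iff (eq_or_eq_or_eq_of_card_eq_three hC hab hac hbc)
    hab hac hGab hGac hHba hHca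
  rw [attackYes_condorcetRule_iff hwin]
  constructor
  · rintro ⟨I, -, hI⟩ ⟨I₀, hI₀card, hI₀sum⟩
    by_cases hlast : Fin.last n ∈ I
    · obtain ⟨j, -, hj⟩ : ∃ j ∈ I₀, w j < M' :=
        exists_lt_of_sum_lt (by simpa [hI₀card, hI₀sum, mul_comm] using hMkM')
      refine hI {j.castSucc} ((card_singleton _).trans_le hkpos) ((hCW _).2 ?_)
      have hpos := sum_pos_and_sum_sub_pos_of_mem (S := univ.filter fun i : Fin n =>
        i.castSucc ∈ univ \ (I \ {j.castSucc})) (by simp) (hwpos j) hj hwle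
      rwa [if_neg (by simp [hlast, (Fin.castSucc_lt_last j).ne'])]
    · refine hI (I₀.map Fin.castSuccEmb) (by simpa using hI₀card.le) ((hCW _).2 ?_)
      rw [if_pos (by simp [hlast])]
      refine le_sum_and_le_sum_sub_of_subset ?_ hI₀card hI₀sum hwle
      intro i hi
      simp [hi]
  · intro hno
    refine ⟨univ.map Fin.castSuccEmb, by simp, fun I' hI' hwinT => hno ?_⟩
    have hM' : 0 < M' := Nat.pos_of_ne_zero (by rintro rfl; simp at hMkM')
    have hS : (univ.filter fun j : Fin n =>
        j.castSucc ∈ univ \ (univ.map Fin.castSuccEmb \ I')).card ≤ k :=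
      (card_le_card_of_injOn Fin.castSucc (fun j hj => by simpa using hj)
        (Fin.castSucc_injective n).injOn).trans hI'
    rw [hCW, if_pos (by simp)] at hwinT
    exact ⟨_, card_eq_and_sum_eq_of_le_sum hM' hS hwinT.1 hwinT.2⟩

/-- the k-Sum reduction instance for Optimal Attack under the
Condorcet voting rule with 3 candidates. -/
theorem stmt5 {C : Type} [Fintype C] [DecidableEq C] (hC : Fintype.card C = 3)
    (a b c : C) (hab : a ≠ b) (hac : a ≠ c) (hbc : b ≠ c)
    (n : ℕ) (w : Fin n → ℕ) (hwpos : ∀ i, 0 < w i)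
    (M k M' : ℕ) (hMpos : 0 < M) (hkpos : 0 < k) (hkn : k ≤ n) (h2k : 2 * k < n)
    (hMsum : M < ∑ i, w i) (hM'def : M' = Finset.univ.sup w) (hMkM' : M < k * M')
    (G : Fin n → Multiset (Vote C 3)) (Ghat : Multiset (Vote C 3))
    (hGab : ∀ i, margin (G i) a b = 2 * (w i : ℤ))
    (hGac : ∀ i, margin (G i) a c = 2 * ((M' : ℤ) - (w i : ℤ)))
    (hGbc : ∀ i, margin (G i) b c = 0)
    (hHba : margin Ghat b a = 2 * (M : ℤ) - 1)
    (hHca : margin Ghat c a = 2 * ((k : ℤ) * (M' : ℤ) - (M : ℤ)) - 1)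
    (hHbc : margin Ghat b c = 1)
    (hwin : CondorcetWinner (∑ i : Fin (n + 1), (Fin.snoc G Ghat : Fin (n + 1) → Multiset (Vote C 3)) i) a) :
    AttackYes condorcetRule (Fin.snoc G Ghat) (n + 1) k ↔
    ¬ ∃ I : Finset (Fin n), I.card = k ∧ ∑ i ∈ I, w i = M :=
  stmt5_general hC a b c hab hac hbc n w hwpos M k M' hkpos hM'def hMkM' G Ghat hGab hGac hHba hHca
    hwin
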